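/- Let F be a finite field with q elements, q odd, A = F[T], m ∈ A monic of even degree M ≥ 4, and M' = (M−2)/2. Let χ : A → ℤ be completely multiplicative with χ(f) = 0 whenever f is not coprime to m and χ(f)² = 1 whenever f is coprime to m. Set c(n) = ∑_{f monic, deg f = n} χ(f) and b^μ(n) = ∑_{f monic, deg f = n} μ(f)χ(f). Suppose there are pairwise distinct θ_1, …, θ_{M'} ∈ (0, π) such that c(n) = 0 for all n ≥ M and, as polynomials with real coefficients, ∑_{n=0}^{M−1} c(n) X^n = (1 − X)·∏_{j=1}^{M'} (1 − 2√q·cos(θ_j)·X + q X²). Then there exist real numbers δ, γ_1, …, γ_{M'} and φ_1, …, φ_{M'} such that for every n ≥ 1, b^μ(n) = δ + q^{n/2} ∑_{j=1}^{M'} γ_j sin(nθ_j + φ_j). -/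

import Mathlib

open Polynomial
open scoped Classical

/-- The Möbius function on `F[T]`: `(-1)^k` for a squarefree polynomial with `k`
irreducible factors, and `0` for non-squarefree polynomials. -/
noncomputable def polyMoebius {F : Type*} [Field F] (f : F[X]) : ℤ :=
  if Squarefree f then (-1) ^ Multiset.card (UniqueFactorizationMonoid.factors f) else 0

/-- The Liouville function on `F[T]`: `(-1)^{Ω(f)}` where `Ω(f)` is the number of
irreducible factors of `f` counted with multiplicity. -/
noncomputable def polyLiouville {F : Type*} [Field F] (f : F[X]) : ℤ :=
  (-1) ^ Multiset.card (UniqueFactorizationMonoid.factors f)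

/-- The sum of a weight `w` over all monic polynomials of degree `n` in `F[T]`. -/
noncomputable def coeffSum {F : Type*} [Field F] (w : F[X] → ℤ) (n : ℕ) : ℤ :=
  ∑ᶠ f ∈ {f : F[X] | f.Monic ∧ f.natDegree = n}, w f

/-!
The twisted Möbius sums `b^μ(n)` are the coefficients of `1 / ℒ(u, χ)`: the Dirichlet
convolution of `χ` with `μχ` is `χ · (1 ⋆ μ)`, and `∑_{h ∣ f} μ(h) = 0` for `deg f ≥ 1`. Hence
`b^μ` satisfies the linear recurrence whose characteristic roots are the inverse zeros `1` and
`√q e^{±iθ_j}` of `ℒ`. These `M - 1` roots are distinct, so `b^μ(n) = ∑ λ_α α^n`; taking real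
parts and combining each conjugate pair of terms gives the sine form.
-/

open scoped ComplexConjugate Real

section MonicSums

variable {F : Type*} [Field F]

theorem polyMoebius_eq_moebius (f : F[X]) : polyMoebius f = UniqueFactorizationMonoid.moebius f :=
  rfl

theorem polyMoebius_irreducible_mul {p h : F[X]} (hp : Irreducible p) (hph : ¬ p ∣ h) :
    polyMoebius (p * h) = -polyMoebius h := by
  simp only [polyMoebius_eq_moebius, (hp.isRelPrime_iff_not_dvd.mpr hph).moebius_mul,
    hp.moebius_eq, neg_one_mul]

variable [Fintype F]

theorem finite_setOf_monic_natDegree_eq (n : ℕ) :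
    {f : F[X] | f.Monic ∧ f.natDegree = n}.Finite :=
  have : Finite (degreeLT F (n + 1)) := .of_equiv _ (degreeLTEquiv F (n + 1)).toEquiv.symm
  (degreeLT F (n + 1) : Set F[X]).toFinite.subset fun f hf => by
    rw [SetLike.mem_coe, mem_degreeLT]
    exact degree_le_natDegree.trans_lt (by rw [hf.2]; exact_mod_cast Nat.lt_succ_self n)

variable (F) in
noncomputable def monicOfDegree (n : ℕ) : Finset F[X] :=
  (finite_setOf_monic_natDegree_eq n).toFinset

theorem mem_monicOfDegree {n : ℕ} {f : F[X]} :
    f ∈ monicOfDegree F n ↔ f.Monic ∧ f.natDegree = n :=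
  Set.Finite.mem_toFinset _

theorem coeffSum_eq_sum_monicOfDegree (w : F[X] → ℤ) (n : ℕ) :
    coeffSum w n = ∑ f ∈ monicOfDegree F n, w f := by
  rw [coeffSum, ← finsum_mem_coe_finset, monicOfDegree, Set.Finite.coe_toFinset]

noncomputable def monicDivisors (f : F[X]) : Finset F[X] :=
  ((Finset.range (f.natDegree + 1)).biUnion (monicOfDegree F)).filter (· ∣ f)

theorem mem_monicDivisors {f h : F[X]} (hf : f ≠ 0) : h ∈ monicDivisors f ↔ h.Monic ∧ h ∣ f := by
  simp only [monicDivisors, Finset.mem_filter, Finset.mem_biUnion, Finset.mem_range,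
    mem_monicOfDegree]
  exact ⟨fun ⟨⟨_, _, hh, _⟩, hd⟩ => ⟨hh, hd⟩,
    fun ⟨hh, hd⟩ => ⟨⟨_, Nat.lt_succ_of_le (natDegree_le_of_dvd hd hf), hh, rfl⟩, hd⟩⟩

theorem sum_monicDivisors_polyMoebius {f : F[X]} (hf : 0 < f.natDegree) :
    ∑ h ∈ monicDivisors f, polyMoebius h = 0 := by
  obtain ⟨p, hpm, hp, hpf⟩ := exists_monic_irreducible_factor f (not_isUnit_of_natDegree_pos f hf)
  have hf0 : f ≠ 0 := ne_zero_of_natDegree_gt hf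
  -- toggling the factor `p` pairs off the squarefree monic divisors with opposite signs
  set T : F[X] → F[X] := fun h => if p ∣ h then h / p else p * h
  have hT : ∀ h ∈ monicDivisors f, polyMoebius h ≠ 0 →
      polyMoebius (T h) = -polyMoebius h ∧ T h ∈ monicDivisors f ∧ T (T h) = h := by
    intro h hh hμ
    obtain ⟨hhm, hhf⟩ := (mem_monicDivisors hf0).mp hh
    by_cases hph : p ∣ h
    · obtain ⟨k, rfl⟩ := hph
      have hsq : Squarefree (p * k) :=
        by_contra fun hsq => hμ (UniqueFactorizationMonoid.moebius_of_not_squarefree hsq)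
      have hpk : ¬ p ∣ k := fun hpk => hp.not_isUnit (hsq p (mul_dvd_mul_left p hpk))
      have hTpk : T (p * k) = k := by simp [T, mul_div_cancel_left₀ _ hp.ne_zero]
      simp only [hTpk, polyMoebius_irreducible_mul hp hpk, neg_neg, T, if_neg hpk,
        mem_monicDivisors hf0]
      exact ⟨trivial, ⟨hpm.of_mul_monic_left hhm, dvd_of_mul_left_dvd hhf⟩, trivial⟩
    · have hTh : T h = p * h := if_neg hph
      simp only [hTh, polyMoebius_irreducible_mul hp hph, mem_monicDivisors hf0, T,
        if_pos (dvd_mul_right p h), mul_div_cancel_left₀ _ hp.ne_zero]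
      exact ⟨trivial, ⟨hpm.mul hhm, (hp.isRelPrime_iff_not_dvd.mpr hph).mul_dvd hpf hhf⟩, trivial⟩
  rw [← Finset.sum_filter_ne_zero]
  refine Finset.sum_involution (fun h _ => T h) (fun h hh => ?_) (fun h hh _ hTh => ?_)
    (fun h hh => ?_) (fun h hh => ?_) <;>
  obtain ⟨hD, hμ0⟩ := Finset.mem_filter.mp hh <;>
  obtain ⟨hμT, hTD, hTT⟩ := hT h hD hμ0
  · rw [hμT, add_neg_cancel]
  · rw [hTh] at hμT
    omega
  · exact Finset.mem_filter.mpr ⟨hTD, by rw [hμT]; exact neg_ne_zero.mpr hμ0⟩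
  · exact hTT

theorem sum_range_coeffSum_mul_coeffSum (u v : F[X] → ℤ) (n : ℕ) :
    ∑ k ∈ Finset.range (n + 1), coeffSum u k * coeffSum v (n - k) =
      ∑ f ∈ monicOfDegree F n, ∑ h ∈ monicDivisors f, u (f / h) * v h := by
  simp_rw [coeffSum_eq_sum_monicOfDegree, Finset.sum_mul_sum, ← Finset.sum_product']
  rw [Finset.sum_sigma', Finset.sum_sigma']
  refine Finset.sum_nbij' (fun x => ⟨x.2.1 * x.2.2, x.2.2⟩)
    (fun y => ⟨n - y.2.natDegree, (y.1 / y.2, y.2)⟩) ?_ ?_ ?_ ?_ ?_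
  · rintro ⟨k, g, h⟩ hx
    simp only [Finset.mem_sigma, Finset.mem_range, Finset.mem_product,
      mem_monicOfDegree] at hx ⊢
    obtain ⟨hk, ⟨hgm, hgd⟩, hhm, hhd⟩ := hx
    refine ⟨⟨hgm.mul hhm, by rw [hgm.natDegree_mul hhm]; omega⟩,
      (mem_monicDivisors (hgm.mul hhm).ne_zero).mpr ⟨hhm, dvd_mul_left h g⟩⟩
  · rintro ⟨f, h⟩ hy
    simp only [Finset.mem_sigma, Finset.mem_range, Finset.mem_product,
      mem_monicOfDegree] at hy ⊢
    obtain ⟨⟨hfm, hfd⟩, hh⟩ := hy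
    obtain ⟨hhm, g, rfl⟩ := (mem_monicDivisors hfm.ne_zero).mp hh
    have hgm : g.Monic := hhm.of_mul_monic_left hfm
    rw [hhm.natDegree_mul hgm] at hfd
    rw [mul_div_cancel_left₀ _ hhm.ne_zero]
    exact ⟨by omega, ⟨hgm, by omega⟩, hhm, by omega⟩
  · rintro ⟨k, g, h⟩ hx
    simp only [Finset.mem_sigma, Finset.mem_range, Finset.mem_product,
      mem_monicOfDegree] at hx
    obtain ⟨hk, -, hhm, hhd⟩ := hx
    simp only [mul_div_cancel_right₀ _ hhm.ne_zero, hhd]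
    congr
    omega
  · rintro ⟨f, h⟩ hy
    simp only [Finset.mem_sigma, mem_monicOfDegree] at hy
    obtain ⟨hhm, g, rfl⟩ := (mem_monicDivisors hy.1.1.ne_zero).mp hy.2
    simp only [mul_div_cancel_left₀ _ hhm.ne_zero, mul_comm g h]
  · rintro ⟨k, g, h⟩ hx
    simp only [Finset.mem_sigma, Finset.mem_product, mem_monicOfDegree] at hx
    simp only [mul_div_cancel_right₀ _ hx.2.2.1.ne_zero]

theorem sum_range_coeffSum_mul_coeffSum_moebius_mul {χ : F[X] → ℤ}
    (hχmul : ∀ f g, χ (f * g) = χ f * χ g) {n : ℕ} (hn : 0 < n) :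
    ∑ k ∈ Finset.range (n + 1), coeffSum χ k * coeffSum (fun f => polyMoebius f * χ f) (n - k) =
      0 := by
  rw [sum_range_coeffSum_mul_coeffSum]
  refine Finset.sum_eq_zero fun f hf => ?_
  obtain ⟨hfm, hfn⟩ := mem_monicOfDegree.mp hf
  calc ∑ h ∈ monicDivisors f, χ (f / h) * (polyMoebius h * χ h)
      = χ f * ∑ h ∈ monicDivisors f, polyMoebius h := by
        rw [Finset.mul_sum]
        refine Finset.sum_congr rfl fun h hh => ?_
        obtain ⟨hhm, g, rfl⟩ := (mem_monicDivisors hfm.ne_zero).mp hh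
        rw [mul_div_cancel_left₀ _ hhm.ne_zero, hχmul]
        ring
    _ = 0 := by rw [sum_monicDivisors_polyMoebius (hfn ▸ hn), mul_zero]

end MonicSums

theorem linearIndependent_geom {K ι : Type*} [Field K] {α : ι → K} (hα : Function.Injective α) :
    LinearIndependent K (fun i (n : ℕ) => α i ^ n) :=
  Module.End.eigenvectors_linearIndependent' (LinearMap.funLeft K K Nat.succ) α hα _ fun i =>
    Module.End.hasEigenvector_iff.mpr
      ⟨Module.End.mem_eigenspace_iff.mpr (funext fun n => by simp [pow_succ']),
        fun h => by simpa using congrFun h 0⟩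

namespace LinearRecurrence

variable {K : Type*} [Field K]

theorem exists_eq_sum_geom_of_isSolution (E : LinearRecurrence K) {ι : Type*} [Fintype ι]
    {α : ι → K} (hα : Function.Injective α) (hcard : Fintype.card ι = E.order)
    (hroot : ∀ i, E.charPoly.IsRoot (α i)) {u : ℕ → K} (hu : E.IsSolution u) :
    ∃ a : ι → K, ∀ n, u n = ∑ i, a i * α i ^ n := by
  let v : ι → E.solSpace := fun i => ⟨_, (E.geom_sol_iff_root_charPoly _).mpr (hroot i)⟩
  have hv : LinearIndependent K v := .of_comp E.solSpace.subtype (linearIndependent_geom hα)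
  have : FiniteDimensional K E.solSpace := E.basis.finiteDimensional_of_finite
  have hspan := hv.span_eq_top_of_card_eq_finrank' (by
    rw [hcard, Module.finrank_eq_card_basis E.basis, Fintype.card_fin])
  obtain ⟨a, ha⟩ := (Submodule.mem_span_range_iff_exists_fun K).mp
    (hspan ▸ Submodule.mem_top : (⟨u, hu⟩ : E.solSpace) ∈ _)
  refine ⟨a, fun n => ?_⟩
  have := congrFun (congrArg Subtype.val ha) n
  simpa [v, eq_comm, mul_comm] using this

/-- The recurrence `∑_{k ≤ d} c k * u (n - k) = 0` (`n ≥ d`), solved for `u n` when `c 0 = 1`. -/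
def ofCoeffs (d : ℕ) (c : ℕ → K) : LinearRecurrence K := ⟨d, fun i => -c (d - i)⟩

theorem isSolution_ofCoeffs {d : ℕ} {c u : ℕ → K} (hc0 : c 0 = 1)
    (hu : ∀ n, d ≤ n → ∑ k ∈ Finset.range (d + 1), c k * u (n - k) = 0) :
    (ofCoeffs d c).IsSolution u := by
  intro n
  show u (n + d) = ∑ i : Fin d, -c (d - i) * u (n + i)
  have h := hu (n + d) (Nat.le_add_left d n)
  rw [Finset.sum_range_succ', ← Finset.sum_range_reflect, hc0, one_mul, Nat.sub_zero] at h
  rw [Fin.sum_univ_eq_sum_range (fun i => -c (d - i) * u (n + i)),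
    eq_neg_of_add_eq_zero_right h, ← Finset.sum_neg_distrib]
  refine Finset.sum_congr rfl fun i hi => ?_
  rw [Finset.mem_range] at hi
  rw [neg_mul]
  congr 3 <;> omega

theorem exists_eq_sum_geom_of_sum_eq_zero {d : ℕ} {c u : ℕ → K} (hc0 : c 0 = 1)
    (hu : ∀ n, d ≤ n → ∑ k ∈ Finset.range (d + 1), c k * u (n - k) = 0)
    {ι : Type*} [Fintype ι] {α : ι → K} (hα : Function.Injective α)
    (hcard : Fintype.card ι = d) (hα0 : ∀ i, α i ≠ 0)
    (hroot : ∀ i, ∑ k ∈ Finset.range (d + 1), c k * (α i)⁻¹ ^ k = 0) :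
    ∃ a : ι → K, ∀ n, u n = ∑ i, a i * α i ^ n := by
  refine (ofCoeffs d c).exists_eq_sum_geom_of_isSolution hα hcard (fun i => ?_)
    (isSolution_ofCoeffs hc0 hu)
  refine (geom_sol_iff_root_charPoly _ _).mp (isSolution_ofCoeffs hc0 fun n hn => ?_)
  rw [← mul_zero (α i ^ n), ← hroot i, Finset.mul_sum]
  refine Finset.sum_congr rfl fun k hk => ?_
  rw [pow_sub₀ _ (hα0 i) (by grind), inv_pow]
  ring

end LinearRecurrence

namespace Complex

theorem one_sub_two_re_mul_inv_add_normSq_mul_inv_sq {z : ℂ} (hz : z ≠ 0) :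
    1 - 2 * z.re * z⁻¹ + normSq z * z⁻¹ ^ 2 = 0 := by
  rw [normSq_eq_conj_mul_self, re_eq_add_conj]
  field_simp
  ring

theorem re_mul_add_mul_conj (a b w : ℂ) : (a * w + b * conj w).re = ((a + conj b) * w).re := by
  simp only [add_re, add_im, mul_re, conj_re, conj_im]
  ring

theorem re_mul_exp_ofReal_mul_I (κ : ℂ) (x : ℝ) :
    (κ * exp (x * I)).re = ‖κ‖ * Real.sin (x + (arg κ + π / 2)) := by
  conv_lhs => rw [← norm_mul_exp_arg_mul_I κ]
  rw [mul_assoc, ← exp_add, ← add_mul, ← ofReal_add, re_ofReal_mul, exp_ofReal_mul_I_re,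
    ← add_assoc, Real.sin_add_pi_div_two, add_comm x]

end Complex

section InverseZeros

open Complex

variable {N : ℕ} (r : ℝ) (θ : Fin N → ℝ)

/-- The inverse zeros `1`, `r e^{iθ_j}`, `r e^{-iθ_j}` of
`(1 - u) ∏_j (1 - 2 r cos θ_j u + r² u²)`. -/
noncomputable def inverseZeros : Unit ⊕ (Fin N ⊕ Fin N) → ℂ :=
  Sum.elim (fun _ => 1) (Sum.elim (fun j => r * exp (θ j * I)) (fun j => conj (r * exp (θ j * I))))

theorem inverseZeros_injective (hr0 : 0 < r) (hr1 : r ≠ 1) (hθinj : Function.Injective θ)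
    (hθmem : ∀ j, θ j ∈ Set.Ioo 0 π) : Function.Injective (inverseZeros r θ) := by
  set z : Fin N → ℂ := fun j => r * exp (θ j * I)
  have hz_im : ∀ j, 0 < (z j).im := fun j => by
    simp only [z, im_ofReal_mul, exp_ofReal_mul_I_im]
    exact mul_pos hr0 (Real.sin_pos_of_pos_of_lt_pi (hθmem j).1 (hθmem j).2)
  have hz_inj : Function.Injective z := fun j k h => hθinj <|
    Real.injOn_cos ⟨(hθmem j).1.le, (hθmem j).2.le⟩ ⟨(hθmem k).1.le, (hθmem k).2.le⟩ <|
      mul_left_cancel₀ hr0.ne' (by simpa [z, exp_ofReal_mul_I_re] using congrArg re h)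
  refine Function.injective_of_subsingleton _ |>.sumElim
    (hz_inj.sumElim (star_injective.comp hz_inj) fun j k h => ?_) fun _ w h => hr1 ?_
  · have := congrArg im h
    simp only [conj_im] at this
    linarith [hz_im j, hz_im k]
  · rcases w with j | j <;>
      simpa [z, norm_exp_ofReal_mul_I, abs_of_pos hr0] using (congrArg norm h).symm

theorem inverseZeros_ne_zero (hr : r ≠ 0) (i : Unit ⊕ (Fin N ⊕ Fin N)) :
    inverseZeros r θ i ≠ 0 := by
  rcases i with _ | j | j <;> simp [inverseZeros, hr]

theorem aeval_inv_inverseZeros (hr : r ≠ 0) (i : Unit ⊕ (Fin N ⊕ Fin N)) :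
    aeval (inverseZeros r θ i)⁻¹
      ((1 - X) * ∏ j, (1 - C (2 * r * Real.cos (θ j)) * X + C (r ^ 2) * X ^ 2)) = 0 := by
  simp only [map_mul, map_sub, map_one, map_prod, map_add, map_pow, aeval_X, aeval_C,
    coe_algebraMap]
  have h := one_sub_two_re_mul_inv_add_normSq_mul_inv_sq (inverseZeros_ne_zero r θ hr i)
  rcases i with _ | j | j
  · simp [inverseZeros]
  all_goals refine mul_eq_zero_of_right _ (Finset.prod_eq_zero (Finset.mem_univ j) ?_)
  all_goals simpa [inverseZeros, exp_ofReal_mul_I_re, mul_assoc, normSq_eq_norm_sq,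
    norm_exp_ofReal_mul_I] using h

theorem re_sum_mul_inverseZeros_pow (a : Unit ⊕ (Fin N ⊕ Fin N) → ℂ) (n : ℕ) :
    (∑ i, a i * inverseZeros r θ i ^ n).re = (a (.inl ())).re + r ^ n *
      ∑ j, ‖a (.inr (.inl j)) + conj (a (.inr (.inr j)))‖ *
        Real.sin (n * θ j + (arg (a (.inr (.inl j)) + conj (a (.inr (.inr j)))) + π / 2)) := by
  rw [Fintype.sum_sum_type, Fintype.sum_sum_type, ← Finset.sum_add_distrib]
  simp only [inverseZeros, Sum.elim_inl, Sum.elim_inr, ← map_pow, one_pow, mul_one,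
    Finset.univ_unique, Finset.sum_singleton, add_re, re_sum, Finset.mul_sum]
  congr 1
  refine Finset.sum_congr rfl fun j _ => ?_
  have hz_pow : ((r : ℂ) * exp (θ j * I)) ^ n = ((r ^ n : ℝ) : ℂ) * exp ((n * θ j : ℝ) * I) := by
    rw [mul_pow, ← exp_nat_mul]
    push_cast
    ring_nf
  rw [← add_re, re_mul_add_mul_conj, hz_pow, mul_left_comm, re_ofReal_mul,
    re_mul_exp_ofReal_mul_I]

end InverseZeros

open Complex in
theorem exists_eq_trig_sum_of_recurrence {N : ℕ} {r : ℝ} (hr0 : 0 < r) (hr1 : r ≠ 1)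
    {θ : Fin N → ℝ} (hθinj : Function.Injective θ) (hθmem : ∀ j, θ j ∈ Set.Ioo 0 π)
    {c b : ℕ → ℝ}
    (hrec : ∀ n, 2 * N + 1 ≤ n → ∑ k ∈ Finset.range (2 * N + 2), c k * b (n - k) = 0)
    (hL : ∑ k ∈ Finset.range (2 * N + 2), C (c k) * X ^ k =
      (1 - X) * ∏ j, (1 - C (2 * r * Real.cos (θ j)) * X + C (r ^ 2) * X ^ 2)) :
    ∃ δ : ℝ, ∃ γ φ : Fin N → ℝ, ∀ n : ℕ,
      b n = δ + r ^ n * ∑ j, γ j * Real.sin (n * θ j + φ j) := by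
  have hc0 : c 0 = 1 := by
    simpa [eval_finsetSum, eval_prod, Finset.sum_range_succ'] using congrArg (eval 0) hL
  obtain ⟨a, ha⟩ := LinearRecurrence.exists_eq_sum_geom_of_sum_eq_zero (c := fun k => (c k : ℂ))
    (u := fun k => (b k : ℂ)) (by simp [hc0]) (fun n hn => by exact_mod_cast hrec n hn)
    (inverseZeros_injective r θ hr0 hr1 hθinj hθmem)
    (by rw [Fintype.card_sum, Fintype.card_sum, Fintype.card_unit, Fintype.card_fin]; ring)
    (inverseZeros_ne_zero r θ hr0.ne') fun i => by
      simpa using (congrArg (aeval (inverseZeros r θ i)⁻¹) hL).trans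
        (aeval_inv_inverseZeros r θ hr0.ne' i)
  exact ⟨_, _, _, fun n => by rw [← ofReal_re (b n), ha n, re_sum_mul_inverseZeros_pow]⟩

theorem muBias_trigonometric_form_even_general {F : Type*} [Field F] [Fintype F]
    (m : Polynomial F) (hMeven : Even m.natDegree) (hM4 : 4 ≤ m.natDegree)
    (χ : Polynomial F → ℤ) (hχmul : ∀ f g, χ (f * g) = χ f * χ g)
    (θ : Fin ((m.natDegree - 2) / 2) → ℝ) (hθinj : Function.Injective θ)
    (hθmem : ∀ j, θ j ∈ Set.Ioo 0 Real.pi)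
    (hvanish : ∀ n, m.natDegree ≤ n → coeffSum χ n = 0)
    (hfact : (∑ n ∈ Finset.range m.natDegree,
          Polynomial.C ((coeffSum χ n : ℤ) : ℝ) * Polynomial.X ^ n) =
        (1 - Polynomial.X) *
          ∏ j, (1 - Polynomial.C (2 * Real.sqrt (Fintype.card F) * Real.cos (θ j)) * Polynomial.X
            + Polynomial.C ((Fintype.card F : ℝ)) * Polynomial.X ^ 2)) :
    ∃ δ : ℝ, ∃ γ φ : Fin ((m.natDegree - 2) / 2) → ℝ, ∀ n : ℕ, 1 ≤ n →
      ((coeffSum (fun f => polyMoebius f * χ f) n : ℤ) : ℝ) =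
        δ + (Fintype.card F : ℝ) ^ ((n : ℝ) / 2) *
          ∑ j, γ j * Real.sin (n * θ j + φ j) := by
  set N := (m.natDegree - 2) / 2
  have hM : m.natDegree = 2 * N + 2 := by
    obtain ⟨t, ht⟩ := hMeven
    omega
  have hq : (1 : ℝ) < Fintype.card F := by exact_mod_cast Fintype.one_lt_card
  have hrec : ∀ n, 2 * N + 1 ≤ n → ∑ k ∈ Finset.range (2 * N + 2),
      (coeffSum χ k : ℝ) * coeffSum (fun f => polyMoebius f * χ f) (n - k) = 0 := by
    intro n hn
    have h := sum_range_coeffSum_mul_coeffSum_moebius_mul hχmul (n := n) (by omega)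
    rw [← Finset.sum_subset (Finset.range_subset_range.mpr (show 2 * N + 2 ≤ n + 1 by omega))
      fun k _ hk => by rw [hvanish k (by simpa [hM] using hk), zero_mul]] at h
    exact_mod_cast h
  obtain ⟨δ, γ, φ, h⟩ := exists_eq_trig_sum_of_recurrence (Real.sqrt_pos.mpr (by linarith))
    (Real.lt_sqrt_of_sq_lt (by linarith)).ne' hθinj hθmem
    (b := fun n => (coeffSum (fun f => polyMoebius f * χ f) n : ℝ)) hrec
    (by rw [Real.sq_sqrt (by linarith), ← hM]; exact hfact)
  refine ⟨δ, γ, φ, fun n _ => ?_⟩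
  rw [h n, Real.rpow_div_two_eq_sqrt _ (by linarith), Real.rpow_natCast]

/-- For a quadratic character `χ` modulo a monic `m` of even degree
`M ≥ 4` over `F_q` (`q` odd), assuming the factorization of `ℒ(u,χ)` with a simple zero at
`u = 1` and inverse zeros `√q e^{±iθ_j}`, the bias satisfies
`b^μ(n) = δ + q^{n/2} ∑_j γ_j sin(nθ_j + φ_j)` for all `n ≥ 1`. -/
theorem muBias_trigonometric_form_even {F : Type*} [Field F] [Fintype F]
    (hq : Odd (Fintype.card F))
    (m : Polynomial F) (hm : m.Monic) (hMeven : Even m.natDegree) (hM4 : 4 ≤ m.natDegree)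
    (χ : Polynomial F → ℤ) (hχ1 : χ 1 = 1) (hχmul : ∀ f g, χ (f * g) = χ f * χ g)
    (hχ0 : ∀ f, ¬ IsCoprime f m → χ f = 0) (hχsq : ∀ f, IsCoprime f m → χ f ^ 2 = 1)
    (θ : Fin ((m.natDegree - 2) / 2) → ℝ) (hθinj : Function.Injective θ)
    (hθmem : ∀ j, θ j ∈ Set.Ioo 0 Real.pi)
    (hvanish : ∀ n, m.natDegree ≤ n → coeffSum χ n = 0)
    (hfact : (∑ n ∈ Finset.range m.natDegree,
          Polynomial.C ((coeffSum χ n : ℤ) : ℝ) * Polynomial.X ^ n) =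
        (1 - Polynomial.X) *
          ∏ j, (1 - Polynomial.C (2 * Real.sqrt (Fintype.card F) * Real.cos (θ j)) * Polynomial.X
            + Polynomial.C ((Fintype.card F : ℝ)) * Polynomial.X ^ 2)) :
    ∃ δ : ℝ, ∃ γ φ : Fin ((m.natDegree - 2) / 2) → ℝ, ∀ n : ℕ, 1 ≤ n →
      ((coeffSum (fun f => polyMoebius f * χ f) n : ℤ) : ℝ) =
        δ + (Fintype.card F : ℝ) ^ ((n : ℝ) / 2) *
          ∑ j, γ j * Real.sin (n * θ j + φ j) :=
  muBias_trigonometric_form_even_general m hMeven hM4 χ hχmul θ hθinj hθmem hvanish hfact
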